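/- arXiv:2408.13112 — 3 statements merged into one kernel-verified Lean document; each statement's English description precedes it below -/
import Mathlib

section
/- Let V̄ be a finite set of units, O ⊆ V̄ the output units, and A a finite set of arcs (i,j). Suppose given continuously differentiable functions ξ_i, p_i, α_i (for i ∈ V̄), w_{ij}, p_{ij}, β_{ij}, ω_{ij} (for (i,j) ∈ A), φ_i (for i ∈ O), a C¹ function σ : ℝ → ℝ, and for each i ∈ O a C¹ potential V_i : ℝ × ℝ → ℝ. Define a_i(t) := ∑_{j:(i,j)∈A} ω_{ij}(t) w_{ij}(t) ξ_j(t) and the Hamiltonian H(t) := −½∑_{(i,j)∈A} β_{ij}(t) p_{ij}(t)² + ∑_{i∈O} φ_i(t) V_i(ξ_i(t),t) + ∑_{i∈V̄} α_i(t) p_i(t) (−ξ_i(t) + σ(a_i(t))). Assume the Hamilton equations with s ≡ 1 hold for all t: ξ̇_i = α_i(−ξ_i + σ(a_i)); ẇ_{ij} = −β_{ij} p_{ij}; ṗ_i = −φ_i ∂₁V_i(ξ_i,t)·[i∈O] + α_i p_i − ∑_{κ:(κ,i)∈A} α_κ ω_{κi} σ'(a_κ) w_{κi} p_κ; ṗ_{ij}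 = −α_i ω_{ij} σ'(a_i) p_i ξ_j. Then for every t ≥ 0, E(t) = (H(t) − H(0)) + D(t), where E(t) := ∫₀ᵗ ∑_{i∈O} φ_i(τ) ∂₂V_i(ξ_i(τ),τ) dτ and D(t) := D_φ(t) + D_β(t) + D_α(t) + D_ω(t), with D_φ := −∫₀ᵗ ∑_{i∈O} φ̇_i V_i(ξ_i,τ) dτ, D_β := ½∫₀ᵗ ∑_{(i,j)} β̇_{ij} p_{ij}² dτ, D_α := −∫₀ᵗ ∑_{i} α̇_i p_i (−ξ_i + σ(a_i)) dτ, and D_ω := −∫₀ᵗ ∑_{i} α_i p_i σ'(a_i) ∑_j ω̇_{ij} w_{ij} ξ_j dτ. -/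
/-!
Along any C¹ trajectory the chain rule writes `Ḣ` as its explicit time derivative `∂ₜH` plus
terms of the form `(∂H/∂q) q̇ + (∂H/∂p) ṗ`, one pair for each unit `(ξ_i, p_i)` and each arc
`(w_ij, p_ij)`. Hamilton's equations `q̇ = ∂H/∂p`, `ṗ = -∂H/∂q` make these pairs cancel, so
`Ḣ = ∂ₜH`, and `∂ₜH` is the environmental power `∑ φ_i ∂₂V_i` minus the four dissipation
densities. Integrating over `[0, t]` gives `E = ΔH + D`.
-/

open Finset

theorem Finset.sum_fiberwise_dep {α κ M : Type*} [AddCommMonoid M] [DecidableEq κ] [Fintype κ]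
    (s : Finset α) (g : α → κ) (f : κ → α → M) :
    ∑ j, ∑ i ∈ s with g i = j, f j i = ∑ i ∈ s, f (g i) i := by
  calc
    _ = ∑ j, ∑ i ∈ s with g i = j, f (g i) i :=
        sum_congr rfl fun _ _ ↦ sum_congr rfl fun i hi ↦ by rw [(mem_filter.1 hi).2]
    _ = _ := sum_fiberwise _ _ _

theorem hasDerivAt_comp_prodMk_self {V : ℝ → ℝ → ℝ} {f : ℝ → ℝ} {f' τ : ℝ}
    (hV : DifferentiableAt ℝ (fun q : ℝ × ℝ => V q.1 q.2) (f τ, τ)) (hf : HasDerivAt f f' τ) :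
    HasDerivAt (fun s => V (f s) s)
      (deriv (fun y => V y τ) (f τ) * f' + deriv (fun u => V (f τ) u) τ) τ := by
  set L := fderiv ℝ (fun q : ℝ × ℝ => V q.1 q.2) (f τ, τ)
  have hL := hV.hasFDerivAt
  have h₁ : HasDerivAt (fun y => V y τ) (L (1, 0)) (f τ) :=
    (hL.comp_hasDerivAt (f τ) ((hasDerivAt_id (f τ)).prodMk (hasDerivAt_const (f τ) τ)) :)
  have h₂ : HasDerivAt (fun u => V (f τ) u) (L (0, 1)) τ :=
    (hL.comp_hasDerivAt τ ((hasDerivAt_const τ (f τ)).prodMk (hasDerivAt_id τ)) :)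
  have hsplit : L (f', 1) = L (1, 0) * f' + L (0, 1) := by
    rw [show ((f', 1) : ℝ × ℝ) = f' • (1, 0) + (0, 1) by simp, map_add, map_smul, smul_eq_mul,
      mul_comm]
  rw [h₁.deriv, h₂.deriv, ← hsplit]
  exact hL.comp_hasDerivAt_of_eq τ (hf.prodMk (hasDerivAt_id τ)) rfl

theorem continuous_deriv_comp_prodMk_self {V : ℝ → ℝ → ℝ} {f : ℝ → ℝ}
    (hV : ContDiff ℝ 1 (fun q : ℝ × ℝ => V q.1 q.2)) (hf : Continuous f) :
    Continuous fun τ => deriv (fun u => V (f τ) u) τ := by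
  have hL : ∀ τ, deriv (fun u => V (f τ) u) τ
      = fderiv ℝ (fun q : ℝ × ℝ => V q.1 q.2) (f τ, τ) (0, 1) := fun τ =>
    HasDerivAt.deriv <| (hV.differentiable one_ne_zero _).hasFDerivAt.comp_hasDerivAt τ
      ((hasDerivAt_const τ (f τ)).prodMk (hasDerivAt_id τ))
  simp only [hL]
  exact ((hV.continuous_fderiv one_ne_zero).comp (hf.prodMk continuous_id)).clm_apply
    continuous_const

theorem integral_eq_sub_add_integrals_of_hasDerivAt {H e g₁ g₂ g₃ g₄ : ℝ → ℝ}
    (hH : ∀ τ, HasDerivAt H (e τ + (g₁ τ - 1 / 2 * g₂ τ + g₃ τ + g₄ τ)) τ)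
    (he : Continuous e) (hg₁ : Continuous g₁) (hg₂ : Continuous g₂) (hg₃ : Continuous g₃)
    (hg₄ : Continuous g₄) (t : ℝ) :
    ∫ τ in (0 : ℝ)..t, e τ = (H t - H 0) + ((-∫ τ in (0 : ℝ)..t, g₁ τ)
      + 1 / 2 * (∫ τ in (0 : ℝ)..t, g₂ τ) + (-∫ τ in (0 : ℝ)..t, g₃ τ)
      + -∫ τ in (0 : ℝ)..t, g₄ τ) := by
  have hcont : Continuous fun τ => e τ + (g₁ τ - 1 / 2 * g₂ τ + g₃ τ + g₄ τ) := by fun_prop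
  have hftc := intervalIntegral.integral_eq_sub_of_hasDerivAt (fun τ _ => hH τ)
    (hcont.intervalIntegrable 0 t)
  have hi : ∀ {g : ℝ → ℝ}, Continuous g → IntervalIntegrable g MeasureTheory.volume 0 t :=
    fun hg => hg.intervalIntegrable 0 t
  rw [intervalIntegral.integral_add (hi he) (hi (by fun_prop)),
    intervalIntegral.integral_add (hi (by fun_prop)) (hi hg₄),
    intervalIntegral.integral_add (hi (by fun_prop)) (hi hg₃),
    intervalIntegral.integral_sub (hi hg₁) (hi (by fun_prop)),
    intervalIntegral.integral_const_mul] at hftc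
  linarith

section Algebra

/- Values at a fixed time: primed letters are time derivatives, `V₀ i`, `V₁ i`, `V₂ i` stand for
`V_i(ξ_i, t)`, `∂₁V_i(ξ_i, t)`, `∂₂V_i(ξ_i, t)`, and `X i = -ξ_i + σ(a_i)`, `s i = σ'(a_i)`. -/
variable {ι : Type*} [Fintype ι] [DecidableEq ι] {O : Finset ι} {A : Finset (ι × ι)}
  {ξ p α φ ξ' p' α' φ' V₀ V₁ V₂ X s : ι → ℝ} {w pw β ω w' pw' β' ω' : ι × ι → ℝ}

theorem sum_mul_costate_deriv (hξ' : ∀ i, ξ' i = α i * X i)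
    (hp' : ∀ i, p' i = -(if i ∈ O then φ i * V₁ i else 0) + α i * p i
      - ∑ e ∈ A with e.2 = i, α e.1 * ω e * s e.1 * w e * p e.1) :
    ∑ i, α i * p' i * X i
      = -∑ i ∈ O, φ i * V₁ i * ξ' i + ∑ i, α i * p i * ξ' i
        - ∑ e ∈ A, α e.1 * p e.1 * s e.1 * (ω e * w e * ξ' e.2) := by
  have hO : ∑ i, ξ' i * (if i ∈ O then φ i * V₁ i else 0) = ∑ i ∈ O, φ i * V₁ i * ξ' i := by
    simp only [mul_ite, mul_zero, sum_ite_mem, univ_inter, mul_comm]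
  have hA : ∑ i, ξ' i * ∑ e ∈ A with e.2 = i, α e.1 * ω e * s e.1 * w e * p e.1
      = ∑ e ∈ A, α e.1 * p e.1 * s e.1 * (ω e * w e * ξ' e.2) := by
    simp only [mul_sum]
    rw [sum_fiberwise_dep A Prod.snd (fun i e => ξ' i * (α e.1 * ω e * s e.1 * w e * p e.1))]
    exact sum_congr rfl fun _ _ => by ring
  rw [← hO, ← hA]
  simp only [← sum_neg_distrib, ← sum_sub_distrib, ← sum_add_distrib]
  exact sum_congr rfl fun i _ => by rw [hp', hξ']; ring

theorem sum_mul_sum_activation_deriv (c : ι → ℝ) :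
    ∑ i, c i * ∑ e ∈ A with e.1 = i, ((ω' e * w e + ω e * w' e) * ξ e.2 + ω e * w e * ξ' e.2)
      = ∑ i, c i * ∑ e ∈ A with e.1 = i, ω' e * w e * ξ e.2
        + ∑ e ∈ A, c e.1 * (ω e * w' e * ξ e.2) + ∑ e ∈ A, c e.1 * (ω e * w e * ξ' e.2) := by
  rw [← sum_fiberwise_dep A Prod.fst (fun i e => c i * (ω e * w' e * ξ e.2)),
    ← sum_fiberwise_dep A Prod.fst (fun i e => c i * (ω e * w e * ξ' e.2))]
  simp only [← mul_sum, ← sum_add_distrib]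
  refine sum_congr rfl fun i _ => ?_
  rw [← mul_add, ← mul_add, ← sum_add_distrib, ← sum_add_distrib]
  exact congrArg _ (sum_congr rfl fun _ _ => by ring)

theorem hamiltonian_totalDeriv_eq_timeDeriv
    (hξ' : ∀ i, ξ' i = α i * X i)
    (hw' : ∀ e ∈ A, w' e = -β e * pw e)
    (hp' : ∀ i, p' i = -(if i ∈ O then φ i * V₁ i else 0) + α i * p i
      - ∑ e ∈ A with e.2 = i, α e.1 * ω e * s e.1 * w e * p e.1)
    (hpw' : ∀ e ∈ A, pw' e = -α e.1 * ω e * s e.1 * p e.1 * ξ e.2) :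
    -(1 / 2) * ∑ e ∈ A, (β' e * pw e ^ 2 + β e * (2 * pw e * pw' e))
    + ∑ i ∈ O, (φ' i * V₀ i + φ i * (V₁ i * ξ' i + V₂ i))
    + ∑ i, ((α' i * p i + α i * p' i) * X i + α i * p i * (-ξ' i + s i *
        ∑ e ∈ A with e.1 = i, ((ω' e * w e + ω e * w' e) * ξ e.2 + ω e * w e * ξ' e.2)))
    = ∑ i ∈ O, φ i * V₂ i
      + (∑ i ∈ O, φ' i * V₀ i - (1 / 2) * ∑ e ∈ A, β' e * pw e ^ 2
        + ∑ i, α' i * p i * X i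
        + ∑ i, α i * p i * s i * ∑ e ∈ A with e.1 = i, ω' e * w e * ξ e.2) := by
  have hO : ∑ i ∈ O, (φ' i * V₀ i + φ i * (V₁ i * ξ' i + V₂ i))
      = ∑ i ∈ O, φ' i * V₀ i + ∑ i ∈ O, φ i * V₁ i * ξ' i + ∑ i ∈ O, φ i * V₂ i := by
    simp only [← sum_add_distrib]
    exact sum_congr rfl fun _ _ => by ring
  have hβ : ∑ e ∈ A, (β' e * pw e ^ 2 + β e * (2 * pw e * pw' e))
      = ∑ e ∈ A, β' e * pw e ^ 2 + 2 * ∑ e ∈ A, α e.1 * p e.1 * s e.1 * (ω e * w' e * ξ e.2) := by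
    rw [mul_sum, ← sum_add_distrib]
    exact sum_congr rfl fun e he => by rw [hpw' e he, hw' e he]; ring
  have hU : ∑ i, ((α' i * p i + α i * p' i) * X i + α i * p i * (-ξ' i + s i *
        ∑ e ∈ A with e.1 = i, ((ω' e * w e + ω e * w' e) * ξ e.2 + ω e * w e * ξ' e.2)))
      = ∑ i, α' i * p i * X i + ∑ i, α i * p' i * X i - ∑ i, α i * p i * ξ' i
        + ∑ i, α i * p i * s i *
          ∑ e ∈ A with e.1 = i, ((ω' e * w e + ω e * w' e) * ξ e.2 + ω e * w e * ξ' e.2) := by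
    simp only [← sum_add_distrib, ← sum_sub_distrib]
    exact sum_congr rfl fun _ _ => by ring
  rw [hO, hβ, hU, sum_mul_costate_deriv hξ' hp', sum_mul_sum_activation_deriv]
  ring

end Algebra

section Model

variable {ι : Type*} [DecidableEq ι] {O : Finset ι} {A : Finset (ι × ι)}
  {ξ p α φ : ι → ℝ → ℝ} {w pw β ω : ι × ι → ℝ → ℝ} {σ : ℝ → ℝ} {V : ι → ℝ → ℝ → ℝ}
  {a : ι → ℝ → ℝ}

theorem continuous_activation (hξ : ∀ i, ContDiff ℝ 1 (ξ i)) (hw : ∀ e ∈ A, ContDiff ℝ 1 (w e))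
    (hω : ∀ e ∈ A, ContDiff ℝ 1 (ω e))
    (ha : ∀ i t, a i t = ∑ e ∈ A with e.1 = i, ω e t * w e t * ξ e.2 t) (i : ι) :
    Continuous (a i) := by
  have := fun i => (hξ i).continuous
  have := fun e he => (hw e he).continuous
  have := fun e he => (hω e he).continuous
  rw [funext (ha i)]
  fun_prop (disch := exact (mem_filter.1 ‹_›).1)

theorem hasDerivAt_activation (hξ : ∀ i, ContDiff ℝ 1 (ξ i)) (hw : ∀ e ∈ A, ContDiff ℝ 1 (w e))
    (hω : ∀ e ∈ A, ContDiff ℝ 1 (ω e))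
    (ha : ∀ i t, a i t = ∑ e ∈ A with e.1 = i, ω e t * w e t * ξ e.2 t) (i : ι) (τ : ℝ) :
    HasDerivAt (a i) (∑ e ∈ A with e.1 = i, ((deriv (ω e) τ * w e τ + ω e τ * deriv (w e) τ)
      * ξ e.2 τ + ω e τ * w e τ * deriv (ξ e.2) τ)) τ := by
  rw [funext (ha i)]
  refine HasDerivAt.fun_sum fun e he => ?_
  have heA := (mem_filter.1 he).1
  exact (((hω e heA).differentiable one_ne_zero τ).hasDerivAt.fun_mul
    ((hw e heA).differentiable one_ne_zero τ).hasDerivAt).fun_mul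
      ((hξ e.2).differentiable one_ne_zero τ).hasDerivAt

variable [Fintype ι]

theorem hasDerivAt_hamiltonian (hξ : ∀ i, ContDiff ℝ 1 (ξ i)) (hp : ∀ i, ContDiff ℝ 1 (p i))
    (hα : ∀ i, ContDiff ℝ 1 (α i)) (hφ : ∀ i ∈ O, ContDiff ℝ 1 (φ i))
    (hw : ∀ e ∈ A, ContDiff ℝ 1 (w e)) (hpw : ∀ e ∈ A, ContDiff ℝ 1 (pw e))
    (hβ : ∀ e ∈ A, ContDiff ℝ 1 (β e)) (hω : ∀ e ∈ A, ContDiff ℝ 1 (ω e))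
    (hσ : ContDiff ℝ 1 σ) (hV : ∀ i ∈ O, ContDiff ℝ 1 (fun q : ℝ × ℝ => V i q.1 q.2))
    (ha : ∀ i t, a i t = ∑ e ∈ A with e.1 = i, ω e t * w e t * ξ e.2 t)
    {H : ℝ → ℝ} (hH : ∀ t, H t = -(1 / 2) * ∑ e ∈ A, β e t * pw e t ^ 2
      + ∑ i ∈ O, φ i t * V i (ξ i t) t + ∑ i, α i t * p i t * (-(ξ i t) + σ (a i t)))
    (hamξ : ∀ i t, deriv (ξ i) t = α i t * (-(ξ i t) + σ (a i t)))
    (hamw : ∀ e ∈ A, ∀ t, deriv (w e) t = -β e t * pw e t)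
    (hamp : ∀ i t, deriv (p i) t = -(if i ∈ O then φ i t * deriv (fun y => V i y t) (ξ i t) else 0)
      + α i t * p i t
      - ∑ e ∈ A with e.2 = i, α e.1 t * ω e t * deriv σ (a e.1 t) * w e t * p e.1 t)
    (hampw : ∀ e ∈ A, ∀ t, deriv (pw e) t =
      -α e.1 t * ω e t * deriv σ (a e.1 t) * p e.1 t * ξ e.2 t) (τ : ℝ) :
    HasDerivAt H (∑ i ∈ O, φ i τ * deriv (fun u => V i (ξ i τ) u) τ
      + (∑ i ∈ O, deriv (φ i) τ * V i (ξ i τ) τ - (1 / 2) * ∑ e ∈ A, deriv (β e) τ * pw e τ ^ 2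
        + ∑ i, deriv (α i) τ * p i τ * (-(ξ i τ) + σ (a i τ))
        + ∑ i, α i τ * p i τ * deriv σ (a i τ)
          * ∑ e ∈ A with e.1 = i, deriv (ω e) τ * w e τ * ξ e.2 τ)) τ := by
  have hd : ∀ {f : ℝ → ℝ} {x : ℝ}, ContDiff ℝ 1 f → HasDerivAt f (deriv f x) x := fun hf =>
    (hf.differentiable one_ne_zero _).hasDerivAt
  have hpw2 : ∀ e ∈ A, HasDerivAt (fun t => pw e t ^ 2) (2 * pw e τ * deriv (pw e) τ) τ :=
    fun e he => ((hd (hpw e he)).fun_pow 2).congr_deriv (by ring)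
  have hX : ∀ i, HasDerivAt (fun t => -(ξ i t) + σ (a i t))
      (-deriv (ξ i) τ + deriv σ (a i τ) * ∑ e ∈ A with e.1 = i,
        ((deriv (ω e) τ * w e τ + ω e τ * deriv (w e) τ) * ξ e.2 τ
          + ω e τ * w e τ * deriv (ξ e.2) τ)) τ := fun i =>
    (hd (hξ i)).neg.add ((hd hσ).comp τ (hasDerivAt_activation hξ hw hω ha i τ))
  rw [funext hH]
  refine ((((HasDerivAt.fun_sum fun e he => (hd (hβ e he)).fun_mul (hpw2 e he)).const_mul
    (-(1 / 2) : ℝ)).add (HasDerivAt.fun_sum fun i hi => (hd (hφ i hi)).fun_mul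
      (hasDerivAt_comp_prodMk_self ((hV i hi).differentiable one_ne_zero _) (hd (hξ i))))).add
    (HasDerivAt.fun_sum fun i _ => ((hd (hα i)).fun_mul (hd (hp i))).fun_mul (hX i))).congr_deriv ?_
  -- elaborated without the expected type: unifying it first with the goal times out
  exact (hamiltonian_totalDeriv_eq_timeDeriv (ξ := fun i => ξ i τ) (s := fun i => deriv σ (a i τ))
    (V₀ := fun i => V i (ξ i τ) τ) (V₂ := fun i => deriv (fun u => V i (ξ i τ) u) τ)
    (α' := fun i => deriv (α i) τ) (φ' := fun i => deriv (φ i) τ)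
    (β' := fun e => deriv (β e) τ) (ω' := fun e => deriv (ω e) τ) (fun i => hamξ i τ)
    (fun e he => hamw e he τ) (fun i => hamp i τ) (fun e he => hampw e he τ) :)

theorem continuous_power_densities (hξ : ∀ i, ContDiff ℝ 1 (ξ i)) (hp : ∀ i, ContDiff ℝ 1 (p i))
    (hα : ∀ i, ContDiff ℝ 1 (α i)) (hφ : ∀ i ∈ O, ContDiff ℝ 1 (φ i))
    (hw : ∀ e ∈ A, ContDiff ℝ 1 (w e)) (hpw : ∀ e ∈ A, ContDiff ℝ 1 (pw e))
    (hβ : ∀ e ∈ A, ContDiff ℝ 1 (β e)) (hω : ∀ e ∈ A, ContDiff ℝ 1 (ω e))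
    (hσ : ContDiff ℝ 1 σ) (hV : ∀ i ∈ O, ContDiff ℝ 1 (fun q : ℝ × ℝ => V i q.1 q.2))
    (ha : ∀ i t, a i t = ∑ e ∈ A with e.1 = i, ω e t * w e t * ξ e.2 t) :
    (Continuous fun τ => ∑ i ∈ O, φ i τ * deriv (fun u => V i (ξ i τ) u) τ)
    ∧ (Continuous fun τ => ∑ i ∈ O, deriv (φ i) τ * V i (ξ i τ) τ)
    ∧ (Continuous fun τ => ∑ e ∈ A, deriv (β e) τ * pw e τ ^ 2)
    ∧ (Continuous fun τ => ∑ i, deriv (α i) τ * p i τ * (-(ξ i τ) + σ (a i τ)))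
    ∧ (Continuous fun τ => ∑ i, α i τ * p i τ * deriv σ (a i τ)
        * ∑ e ∈ A with e.1 = i, deriv (ω e) τ * w e τ * ξ e.2 τ) := by
  have := fun i => (hξ i).continuous
  have := fun i => (hp i).continuous
  have := fun i => (hα i).continuous
  have := fun i => (hα i).continuous_deriv le_rfl
  have := fun i hi => (hφ i hi).continuous
  have := fun i hi => (hφ i hi).continuous_deriv le_rfl
  have := fun e he => (hw e he).continuous
  have := fun e he => (hpw e he).continuous
  have := fun e he => (hβ e he).continuous_deriv le_rfl
  have := fun e he => (hω e he).continuous_deriv le_rfl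
  have := hσ.continuous
  have := hσ.continuous_deriv le_rfl
  have := continuous_activation hξ hw hω ha
  have := fun i hi => continuous_deriv_comp_prodMk_self (hV i hi) (hξ i).continuous
  have := fun i hi => (hV i hi).continuous.comp ((hξ i).continuous.prodMk continuous_id)
  refine ⟨?_, ?_, ?_, ?_, ?_⟩ <;>
    fun_prop (disch := first | assumption | exact (mem_filter.1 ‹_›).1)

end Model

/-- I Principle of Cognidynamics: along trajectories of the Hamilton equations
of learning (with sign `s ≡ 1`), the environmental energy `E` equals the
variation of the Hamiltonian `ΔH` plus the dissipated energy
`D = D_φ + D_β + D_α + D_ω`. -/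
theorem stmt_9 {ι : Type*} [Fintype ι] [DecidableEq ι]
    (O : Finset ι) (A : Finset (ι × ι))
    (ξ p α φ : ι → ℝ → ℝ) (w pw β ω : ι × ι → ℝ → ℝ)
    (σ : ℝ → ℝ) (V : ι → ℝ → ℝ → ℝ)
    (hξ : ∀ i, ContDiff ℝ 1 (ξ i)) (hp : ∀ i, ContDiff ℝ 1 (p i))
    (hα : ∀ i, ContDiff ℝ 1 (α i)) (hφ : ∀ i ∈ O, ContDiff ℝ 1 (φ i))
    (hw : ∀ e ∈ A, ContDiff ℝ 1 (w e)) (hpw : ∀ e ∈ A, ContDiff ℝ 1 (pw e))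
    (hβ : ∀ e ∈ A, ContDiff ℝ 1 (β e)) (hω : ∀ e ∈ A, ContDiff ℝ 1 (ω e))
    (hσ : ContDiff ℝ 1 σ)
    (hV : ∀ i ∈ O, ContDiff ℝ 1 (fun q : ℝ × ℝ => V i q.1 q.2))
    -- activation
    (a : ι → ℝ → ℝ)
    (ha : ∀ i t, a i t = ∑ e ∈ A.filter (fun e => e.1 = i),
      ω e t * w e t * ξ e.2 t)
    -- the Hamiltonian
    (H : ℝ → ℝ)
    (hH : ∀ t, H t =
      -(1 / 2) * ∑ e ∈ A, β e t * (pw e t) ^ 2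
      + ∑ i ∈ O, φ i t * V i (ξ i t) t
      + ∑ i, α i t * p i t * (-(ξ i t) + σ (a i t)))
    -- Hamilton equations with s ≡ 1
    (hamξ : ∀ i t, deriv (ξ i) t = α i t * (-(ξ i t) + σ (a i t)))
    (hamw : ∀ e ∈ A, ∀ t, deriv (w e) t = -β e t * pw e t)
    (hamp : ∀ i t, deriv (p i) t =
      -(if i ∈ O then φ i t * deriv (fun y => V i y t) (ξ i t) else 0)
      + α i t * p i t
      - ∑ e ∈ A.filter (fun e => e.2 = i),
          α e.1 t * ω e t * deriv σ (a e.1 t) * w e t * p e.1 t)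
    (hampw : ∀ e ∈ A, ∀ t, deriv (pw e) t =
      -α e.1 t * ω e t * deriv σ (a e.1 t) * p e.1 t * ξ e.2 t)
    -- the energy terms
    (E Dφ Dβ Dα Dω : ℝ → ℝ)
    (hE : ∀ t, E t = ∫ τ in (0 : ℝ)..t,
      ∑ i ∈ O, φ i τ * deriv (fun u => V i (ξ i τ) u) τ)
    (hDφ : ∀ t, Dφ t = -∫ τ in (0 : ℝ)..t,
      ∑ i ∈ O, deriv (φ i) τ * V i (ξ i τ) τ)
    (hDβ : ∀ t, Dβ t = (1 / 2) * ∫ τ in (0 : ℝ)..t,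
      ∑ e ∈ A, deriv (β e) τ * (pw e τ) ^ 2)
    (hDα : ∀ t, Dα t = -∫ τ in (0 : ℝ)..t,
      ∑ i, deriv (α i) τ * p i τ * (-(ξ i τ) + σ (a i τ)))
    (hDω : ∀ t, Dω t = -∫ τ in (0 : ℝ)..t,
      ∑ i, α i τ * p i τ * deriv σ (a i τ)
        * ∑ e ∈ A.filter (fun e => e.1 = i), deriv (ω e) τ * w e τ * ξ e.2 τ) :
    ∀ t ≥ (0 : ℝ), E t = (H t - H 0) + (Dφ t + Dβ t + Dα t + Dω t) := by
  intro t _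
  obtain ⟨hcE, hcφ, hcβ, hcα, hcω⟩ :=
    continuous_power_densities hξ hp hα hφ hw hpw hβ hω hσ hV ha
  rw [hE, hDφ, hDβ, hDα, hDω]
  exact integral_eq_sub_add_integrals_of_hasDerivAt
    (hasDerivAt_hamiltonian hξ hp hα hφ hw hpw hβ hω hσ hV ha hH hamξ hamw hamp hampw)
    hcE hcφ hcβ hcα hcω t
end

section
/- Let A be a finite index set and for each a ∈ A let w_a : [0,∞) → ℝ be twice differentiable with ẇ_a and ẅ_a bounded on [0,∞), and let θ_a : [0,∞) → ℝ be nonnegative and continuous. Define K(t) := ½ ∑_{a∈A} ẇ_a(t)² and D(t) := ∫₀ᵗ ∑_{a∈A} θ_a(s)·ẇ_a(s)² ds. Assume there exist P > 0 and t̂ ≥ 0 with θ_a(t) ≥ P for all a ∈ A and all t ≥ t̂, and assume K(t) does not tend to 0 as t → ∞ (i.e., there exist τ > 0 and a sequence t_n → ∞ with K(t_n) ≥ τ for all n). Then D(t) → ∞ as t → ∞. -/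
open MeasureTheory Filter Set Topology

/-! Past `that` the integrand dominates `P · ∑ ẇ_a²`, so `D` is eventually nondecreasing.
Since the `ẅ_a` are bounded, the velocities are uniformly Lipschitz, so `∑ ẇ_a² ≥ τ / 2` on a
window `[t_n, t_n + δ]` of fixed length `δ > 0` after each `t_n`.
Each such window adds at least `P τ δ / 2` to `D`, and there are windows arbitrarily far out. -/

theorem tendsto_atTop_of_monotoneOn_of_exists_add_le {α : Type*} [Preorder α] {F : α → ℝ}
    {T₀ : α} {ε : ℝ} (hF : MonotoneOn F (Ici T₀)) (hε : 0 < ε)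
    (hinc : ∀ T ≥ T₀, ∃ T' ≥ T, F T + ε ≤ F T') : Tendsto F atTop atTop := by
  have hgrow : ∀ k : ℕ, ∃ T ≥ T₀, F T₀ + k * ε ≤ F T := by
    intro k
    induction k with
    | zero => exact ⟨T₀, le_rfl, by simp⟩
    | succ k ih =>
      obtain ⟨T, hT₀, hT⟩ := ih
      obtain ⟨T', hTT', hT'⟩ := hinc T hT₀
      exact ⟨T', hT₀.trans hTT', by push_cast; linarith⟩
  refine tendsto_atTop.2 fun M => ?_
  obtain ⟨k, hk⟩ := exists_nat_ge ((M - F T₀) / ε)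
  obtain ⟨T, hT₀, hT⟩ := hgrow k
  rw [div_le_iff₀ hε] at hk
  filter_upwards [eventually_ge_atTop T] with t ht
  linarith [hF hT₀ (hT₀.trans ht) ht]

theorem ContinuousOn.intervalIntegrable_of_Ici {f : ℝ → ℝ} {a b c : ℝ}
    (hf : ContinuousOn f (Ici a)) (hab : a ≤ b) (hbc : b ≤ c) :
    IntervalIntegrable f volume b c :=
  (hf.mono (Icc_subset_Ici_iff hbc |>.2 hab)).intervalIntegrable_of_Icc hbc

theorem monotoneOn_integral_of_nonneg {f : ℝ → ℝ} {a T₀ : ℝ} (hf : ContinuousOn f (Ici a))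
    (haT₀ : a ≤ T₀) (hnn : ∀ s ≥ T₀, 0 ≤ f s) :
    MonotoneOn (fun t => ∫ s in a..t, f s) (Ici T₀) := by
  intro t₁ ht₁ t₂ _ h12
  have hat₁ : a ≤ t₁ := haT₀.trans ht₁
  dsimp only
  rw [← intervalIntegral.integral_add_adjacent_intervals (hf.intervalIntegrable_of_Ici le_rfl hat₁)
    (hf.intervalIntegrable_of_Ici hat₁ h12)]
  linarith [intervalIntegral.integral_nonneg (μ := volume) h12
    fun s hs => hnn s (le_trans ht₁ hs.1)]

theorem tendsto_integral_atTop_of_frequently_window {f : ℝ → ℝ} {a T₀ c δ : ℝ}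
    (hf : ContinuousOn f (Ici a)) (hnn : ∀ s ≥ T₀, 0 ≤ f s) (hc : 0 < c) (hδ : 0 < δ)
    (hwin : ∃ᶠ t in atTop, ∀ s ∈ Icc t (t + δ), c ≤ f s) :
    Tendsto (fun T => ∫ s in a..T, f s) atTop atTop := by
  have hmono := monotoneOn_integral_of_nonneg hf (le_max_left a T₀)
    fun s hs => hnn s ((le_max_right a T₀).trans hs)
  refine tendsto_atTop_of_monotoneOn_of_exists_add_le hmono (mul_pos hc hδ) fun T hT => ?_
  obtain ⟨t, hwin_t, hTt⟩ := (hwin.and_eventually (eventually_ge_atTop T)).exists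
  have hat : a ≤ t := (le_max_left a T₀).trans (hT.trans hTt)
  have hint := hf.intervalIntegrable_of_Ici hat (by linarith : t ≤ t + δ)
  have hwindow : c * δ ≤ ∫ s in t..t + δ, f s := by
    have := intervalIntegral.integral_mono_on (by linarith) intervalIntegrable_const hint hwin_t
    simpa [mul_comm] using this
  refine ⟨t + δ, by linarith, ?_⟩
  rw [← intervalIntegral.integral_add_adjacent_intervals
    (hf.intervalIntegrable_of_Ici le_rfl hat) hint]
  linarith [hmono hT (hT.trans hTt) hTt]

theorem Finset.sum_sq_le_two_mul_sum_sq_add {ι : Type*} (s : Finset ι) (x y : ι → ℝ) :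
    ∑ i ∈ s, y i ^ 2 ≤ 2 * ∑ i ∈ s, x i ^ 2 + 2 * ∑ i ∈ s, (y i - x i) ^ 2 := by
  rw [Finset.mul_sum, Finset.mul_sum, ← Finset.sum_add_distrib]
  exact Finset.sum_le_sum fun i _ => by nlinarith [sq_nonneg (2 * x i - y i)]

theorem exists_pos_forall_mem_Icc_sum_sq_ge {ι : Type*} [Fintype ι] {v : ι → ℝ → ℝ}
    (hv : ∀ a, Differentiable ℝ (v a)) (hv' : ∀ a, ∃ C : ℝ, ∀ t ≥ (0 : ℝ), |deriv (v a) t| ≤ C)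
    {κ : ℝ} (hκ : 0 < κ) :
    ∃ δ > 0, ∀ t ≥ (0 : ℝ), κ ≤ ∑ a, v a t ^ 2 → ∀ s ∈ Icc t (t + δ), κ / 4 ≤ ∑ a, v a s ^ 2 := by
  choose C hC using hv'
  have hlip : ∀ a, ∀ t ≥ (0 : ℝ), ∀ s ≥ (0 : ℝ), |v a s - v a t| ≤ C a * |s - t| := fun a t ht s hs =>
    (convex_Ici 0).norm_image_sub_le_of_norm_deriv_le (fun x _ => (hv a x))
      (fun x hx => hC a x hx) ht hs
  obtain ⟨δ, hδB, hδ⟩ : ∃ δ : ℝ, δ ^ 2 * ∑ a, C a ^ 2 < κ / 4 ∧ 0 < δ := by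
    have hlim : Tendsto (fun δ : ℝ => δ ^ 2 * ∑ a, C a ^ 2) (𝓝[>] 0) (𝓝 0) :=
      ((continuous_pow 2).mul continuous_const).tendsto' 0 0 (by simp) |>.mono_left
        nhdsWithin_le_nhds
    exact ((hlim.eventually (gt_mem_nhds (by positivity))).and self_mem_nhdsWithin).exists
  refine ⟨δ, hδ, fun t ht hκt s hs => ?_⟩
  have hst : |s - t| ≤ δ := by
    rw [abs_of_nonneg (by linarith [hs.1])]
    linarith [hs.2]
  have hincr : ∑ a, (v a t - v a s) ^ 2 ≤ δ ^ 2 * ∑ a, C a ^ 2 := by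
    rw [Finset.mul_sum]
    refine Finset.sum_le_sum fun a _ => ?_
    have h := hlip a s (ht.trans hs.1) t ht
    calc (v a t - v a s) ^ 2 = |v a t - v a s| ^ 2 := (sq_abs _).symm
      _ ≤ (C a * |t - s|) ^ 2 := pow_le_pow_left₀ (abs_nonneg _) h 2
      _ = C a ^ 2 * |s - t| ^ 2 := by rw [abs_sub_comm]; ring
      _ ≤ δ ^ 2 * C a ^ 2 := by
        rw [mul_comm]; gcongr
  linarith [Finset.univ.sum_sq_le_two_mul_sum_sq_add (fun a => v a s) (fun a => v a t)]

theorem stmt_13_general {ι : Type*} [Fintype ι] (w θ : ι → ℝ → ℝ)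
    (hw' : ∀ a, Differentiable ℝ (deriv (w a)))
    (hw2b : ∀ a, ∃ C : ℝ, ∀ t ≥ (0 : ℝ), |deriv (deriv (w a)) t| ≤ C)
    (hθc : ∀ a, ContinuousOn (θ a) (Set.Ici 0))
    (P that : ℝ) (hP : 0 < P)
    (hθP : ∀ a, ∀ t ≥ that, P ≤ θ a t)
    (τ : ℝ) (hτ : 0 < τ) (tn : ℕ → ℝ)
    (htn : Filter.Tendsto tn Filter.atTop Filter.atTop)
    (hK : ∀ n, τ ≤ (1 / 2) * ∑ a, (deriv (w a) (tn n)) ^ 2) :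
    Filter.Tendsto
      (fun t => ∫ s in (0 : ℝ)..t, ∑ a, θ a s * (deriv (w a) s) ^ 2)
      Filter.atTop Filter.atTop := by
  obtain ⟨δ, hδ, hwin⟩ := exists_pos_forall_mem_Icc_sum_sq_ge hw' hw2b (by positivity : 0 < 2 * τ)
  have hf : ContinuousOn (fun s => ∑ a, θ a s * deriv (w a) s ^ 2) (Ici 0) :=
    continuousOn_finsetSum _ fun a _ => (hθc a).mul ((hw' a).continuous.continuousOn.pow 2)
  have hθ_ge : ∀ s ≥ that, P * ∑ a, deriv (w a) s ^ 2 ≤ ∑ a, θ a s * deriv (w a) s ^ 2 :=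
    fun s hs => Finset.mul_sum _ _ P ▸ Finset.sum_le_sum fun a _ =>
      mul_le_mul_of_nonneg_right (hθP a s hs) (sq_nonneg _)
  refine tendsto_integral_atTop_of_frequently_window hf (T₀ := that) (c := P * (2 * τ / 4))
    (fun s hs => (mul_nonneg hP.le (by positivity)).trans (hθ_ge s hs)) (by positivity) hδ
    (htn.frequently (Eventually.frequently ?_))
  filter_upwards [htn.eventually (eventually_ge_atTop (max 0 that))] with n hn s hs
  have hs_that : that ≤ s := (le_max_right 0 that).trans (hn.trans hs.1)
  exact (mul_le_mul_of_nonneg_left (hwin (tn n) ((le_max_left 0 that).trans hn)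
    (by linarith [hK n]) s hs) hP.le).trans (hθ_ge s hs_that)

/-- Divergence of the dissipated energy: if the weight velocities and
accelerations are bounded, the joint dissipation factors `θ_a` are nonnegative,
continuous, and bounded below by `P > 0` for large times, and the kinetic
energy `K` does not tend to `0` (witnessed by `τ > 0` along a sequence
`t_n → ∞`), then the dissipated energy `D(t) → ∞`. -/
theorem stmt_13 {ι : Type*} [Fintype ι] (w θ : ι → ℝ → ℝ)
    (hw : ∀ a, Differentiable ℝ (w a))
    (hw' : ∀ a, Differentiable ℝ (deriv (w a)))
    (hwb : ∀ a, ∃ C : ℝ, ∀ t ≥ (0 : ℝ), |deriv (w a) t| ≤ C)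
    (hw2b : ∀ a, ∃ C : ℝ, ∀ t ≥ (0 : ℝ), |deriv (deriv (w a)) t| ≤ C)
    (hθnn : ∀ a, ∀ t ≥ (0 : ℝ), 0 ≤ θ a t)
    (hθc : ∀ a, ContinuousOn (θ a) (Set.Ici 0))
    (P that : ℝ) (hP : 0 < P) (hthat : 0 ≤ that)
    (hθP : ∀ a, ∀ t ≥ that, P ≤ θ a t)
    (τ : ℝ) (hτ : 0 < τ) (tn : ℕ → ℝ)
    (htn : Filter.Tendsto tn Filter.atTop Filter.atTop)
    (hK : ∀ n, τ ≤ (1 / 2) * ∑ a, (deriv (w a) (tn n)) ^ 2) :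
    Filter.Tendsto
      (fun t => ∫ s in (0 : ℝ)..t, ∑ a, θ a s * (deriv (w a) s) ^ 2)
      Filter.atTop Filter.atTop :=
  stmt_13_general w θ hw' hw2b hθc P that hP hθP τ hτ tn htn hK
end

section
/- Let A be a finite index set and for each a ∈ A let w_a : [0,∞) → ℝ be twice differentiable with ẇ_a and ẅ_a bounded on [0,∞), and let θ_a : [0,∞) → ℝ be nonnegative and continuous. Assume there exist P > 0 and t̂ ≥ 0 with θ_a(t) ≥ P for all a ∈ A and all t ≥ t̂, and assume the dissipated energy D(t) := ∫₀ᵗ ∑_{a∈A} θ_a(s)·ẇ_a(s)² ds is bounded on [0,∞). Then the kinetic energy K(t) := ½ ∑_{a∈A} ẇ_a(t)² satisfies K(t) → 0 as t → ∞; equivalently, ẇ_a(t) → 0 for every a ∈ A. -/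
open Filter intervalIntegral Set


/-- Weight convergence (generalization): if the weight velocities and
accelerations are bounded, the joint dissipation factors `θ_a` are nonnegative,
continuous, and bounded below by `P > 0` for large times, and the dissipated
energy `D(t) = ∫₀ᵗ ∑ θ_a ẇ_a²` is bounded, then the kinetic energy
`K(t) = ½ ∑ ẇ_a(t)²` tends to `0`; equivalently every `ẇ_a(t) → 0`. -/
theorem stmt_14 {ι : Type*} [Fintype ι] (w θ : ι → ℝ → ℝ)
    (hw : ∀ a, Differentiable ℝ (w a))
    (hw' : ∀ a, Differentiable ℝ (deriv (w a)))
    (hwb : ∀ a, ∃ C : ℝ, ∀ t ≥ (0 : ℝ), |deriv (w a) t| ≤ C)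
    (hw2b : ∀ a, ∃ C : ℝ, ∀ t ≥ (0 : ℝ), |deriv (deriv (w a)) t| ≤ C)
    (hθnn : ∀ a, ∀ t ≥ (0 : ℝ), 0 ≤ θ a t)
    (hθc : ∀ a, ContinuousOn (θ a) (Set.Ici 0))
    (P that : ℝ) (hP : 0 < P) (hthat : 0 ≤ that)
    (hθP : ∀ a, ∀ t ≥ that, P ≤ θ a t)
    (hD : ∃ C : ℝ, ∀ t ≥ (0 : ℝ),
      (∫ s in (0 : ℝ)..t, ∑ a, θ a s * (deriv (w a) s) ^ 2) ≤ C) :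
    Filter.Tendsto (fun t => (1 / 2) * ∑ a, (deriv (w a) t) ^ 2)
        Filter.atTop (nhds 0) ∧
      ∀ a, Filter.Tendsto (fun t => deriv (w a) t) Filter.atTop (nhds 0) := by
  obtain ⟨C, hC⟩ := hD
  -- basic continuity facts
  have hfc : ∀ a, Continuous (deriv (w a)) := fun a => (hw' a).continuous
  have hint : ∀ a, ∀ u v : ℝ, IntervalIntegrable (fun s => (deriv (w a) s) ^ 2)
      MeasureTheory.volume u v := fun a u v => ((hfc a).pow 2).intervalIntegrable u v
  have hθfint : ∀ a, ∀ u v : ℝ, Set.uIcc u v ⊆ Set.Ici (0:ℝ) →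
      IntervalIntegrable (fun s => θ a s * (deriv (w a) s) ^ 2)
        MeasureTheory.volume u v := by
    intro a u v hsub
    exact (((hθc a).mono hsub).mul (((hfc a).pow 2).continuousOn)).intervalIntegrable
  have hsumint : ∀ u v : ℝ, Set.uIcc u v ⊆ Set.Ici (0:ℝ) →
      IntervalIntegrable (fun s => ∑ a, θ a s * (deriv (w a) s) ^ 2)
        MeasureTheory.volume u v := by
    intro u v hsub
    refine ContinuousOn.intervalIntegrable ?_
    exact continuousOn_finset_sum Finset.univ (fun a _ =>
      ((hθc a).mono hsub).mul (((hfc a).pow 2).continuousOn))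
  -- per-index convergence
  have key : ∀ a, Tendsto (fun t => deriv (w a) t) atTop (nhds 0) := by
    intro a
    set f := deriv (w a) with hfdef
    obtain ⟨Cf, hCf⟩ := hwb a
    obtain ⟨Cg, hCg⟩ := hw2b a
    have hCf0 : 0 ≤ Cf := le_trans (abs_nonneg _) (hCf 0 le_rfl)
    have hCg0 : 0 ≤ Cg := le_trans (abs_nonneg _) (hCg 0 le_rfl)
    -- Lipschitz bound for f on [0,∞)
    have hlipf : ∀ x ∈ Set.Ici (0:ℝ), ∀ y ∈ Set.Ici (0:ℝ),
        |f y - f x| ≤ Cg * |y - x| := by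
      intro x hx y hy
      have h := Convex.norm_image_sub_le_of_norm_deriv_le (f := f) (C := Cg)
        (s := Set.Ici 0) (fun z hz => hw' a z)
        (fun z hz => by simpa using hCg z hz) (convex_Ici 0) hx hy
      simpa [Real.norm_eq_abs] using h
    -- Lipschitz bound for f², constant L := 2*Cf*Cg
    set L : ℝ := 2 * Cf * Cg with hLdef
    have hL0 : 0 ≤ L := by positivity
    have hlip2 : ∀ x ∈ Set.Ici (0:ℝ), ∀ y ∈ Set.Ici (0:ℝ),
        |f y ^ 2 - f x ^ 2| ≤ L * |y - x| := by
      intro x hx y hy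
      have h1 : f y ^ 2 - f x ^ 2 = (f y - f x) * (f y + f x) := by ring
      have h2 : |f y + f x| ≤ 2 * Cf := by
        calc |f y + f x| ≤ |f y| + |f x| := abs_add_le _ _
          _ ≤ Cf + Cf := add_le_add (hCf y hy) (hCf x hx)
          _ = 2 * Cf := by ring
      calc |f y ^ 2 - f x ^ 2| = |f y - f x| * |f y + f x| := by
            rw [h1, abs_mul]
        _ ≤ (Cg * |y - x|) * (2 * Cf) :=
            mul_le_mul (hlipf x hx y hy) h2 (abs_nonneg _)
              (by positivity)
        _ = L * |y - x| := by ring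
    -- the running integral of f²
    set G : ℝ → ℝ := fun t => ∫ s in that..t, f s ^ 2 with hGdef
    have hGadd : ∀ u v : ℝ, G u + (∫ s in u..v, f s ^ 2) = G v := by
      intro u v
      exact intervalIntegral.integral_add_adjacent_intervals (hint a that u) (hint a u v)
    have hGmono : Monotone G := by
      intro u v huv
      have h0 : 0 ≤ ∫ s in u..v, f s ^ 2 :=
        intervalIntegral.integral_nonneg huv (fun s _ => sq_nonneg _)
      have := hGadd u v
      linarith
    -- boundedness of G
    set C₀ : ℝ := ∫ s in (0:ℝ)..that, ∑ b, θ b s * (deriv (w b) s) ^ 2 with hC₀def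
    have hGbdd : ∀ t, G t ≤ (C - C₀) / P := by
      have hbig : ∀ t ≥ that, G t ≤ (C - C₀) / P := by
        intro t ht
        have ht0 : (0:ℝ) ≤ t := le_trans hthat ht
        have hsub : Set.uIcc that t ⊆ Set.Ici (0:ℝ) := by
          rw [Set.uIcc_of_le ht]
          exact fun x hx => le_trans hthat hx.1
        have hsub2 : Set.uIcc (0:ℝ) that ⊆ Set.Ici (0:ℝ) := by
          rw [Set.uIcc_of_le hthat]
          exact fun x hx => hx.1
        -- P * G t ≤ ∫ θ a f²
        have h1 : P * G t ≤ ∫ s in that..t, θ a s * f s ^ 2 := by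
          have : (∫ s in that..t, P * f s ^ 2) ≤ ∫ s in that..t, θ a s * f s ^ 2 := by
            apply intervalIntegral.integral_mono_on ht
              ((hint a that t).const_mul P) (hθfint a that t hsub)
            intro s hs
            exact mul_le_mul_of_nonneg_right (hθP a s hs.1) (sq_nonneg _)
          calc P * G t = ∫ s in that..t, P * f s ^ 2 := by
                rw [hGdef]; simp [intervalIntegral.integral_const_mul]
            _ ≤ _ := this
        -- ∫ θ a f² ≤ ∫ ∑
        have h2 : (∫ s in that..t, θ a s * f s ^ 2)
            ≤ ∫ s in that..t, ∑ b, θ b s * (deriv (w b) s) ^ 2 := by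
          apply intervalIntegral.integral_mono_on ht (hθfint a that t hsub)
            (hsumint that t hsub)
          intro s hs
          have hs0 : (0:ℝ) ≤ s := le_trans hthat hs.1
          exact Finset.single_le_sum (f := fun b => θ b s * deriv (w b) s ^ 2)
            (fun b _ => mul_nonneg (hθnn b s hs0) (sq_nonneg _)) (Finset.mem_univ a)
        -- ∫_{that}^t ∑ = ∫_0^t ∑ - C₀ ≤ C - C₀
        have h3 : (∫ s in that..t, ∑ b, θ b s * (deriv (w b) s) ^ 2) ≤ C - C₀ := by
          have hadd := intervalIntegral.integral_add_adjacent_intervals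
            (hsumint 0 that hsub2) (hsumint that t hsub)
          have := hC t ht0
          rw [← hC₀def] at hadd
          linarith
        have : P * G t ≤ C - C₀ := le_trans h1 (le_trans h2 h3)
        rw [le_div_iff₀ hP]
        nlinarith
      intro t
      rcases le_total t that with h | h
      · exact le_trans (hGmono h) (hbig that le_rfl)
      · exact hbig t h
    -- G converges
    have hGlim : Tendsto G atTop (nhds (⨆ t, G t)) :=
      tendsto_atTop_ciSup hGmono ⟨(C - C₀) / P, fun x ⟨t, ht⟩ => ht ▸ hGbdd t⟩
    -- now the Barbalat argument
    rw [Metric.tendsto_atTop]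
    by_contra hcon
    push_neg at hcon
    obtain ⟨ε, hε, hfreq⟩ := hcon
    set δ : ℝ := ε ^ 2 / (2 * (L + 1)) with hδdef
    have hδ0 : 0 < δ := by positivity
    set c : ℝ := δ * (ε ^ 2 / 2) with hcdef
    have hc0 : 0 < c := by positivity
    -- eventually the increments of G are small
    have hdiff : Tendsto (fun t => G (t + δ) - G t) atTop (nhds 0) := by
      have h1 : Tendsto (fun t => G (t + δ)) atTop (nhds (⨆ t, G t)) :=
        hGlim.comp (tendsto_atTop_add_const_right atTop δ tendsto_id)
      have := h1.sub hGlim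
      simpa using this
    have hev : ∀ᶠ t in atTop, G (t + δ) - G t < c :=
      hdiff.eventually (Filter.Tendsto.eventually_lt_const hc0 tendsto_id) |>.mono (fun x hx => hx)
    rw [eventually_atTop] at hev
    obtain ⟨N, hN⟩ := hev
    obtain ⟨t, ht, hft⟩ := hfreq (max N that)
    have htN : N ≤ t := le_trans (le_max_left _ _) ht
    have htthat : that ≤ t := le_trans (le_max_right _ _) ht
    have ht0 : (0:ℝ) ≤ t := le_trans hthat htthat
    have hft' : ε ≤ |f t| := by simpa [Real.dist_eq] using hft
    -- on [t, t+δ], f² ≥ ε²/2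
    have hbig : ∀ s ∈ Set.Icc t (t + δ), ε ^ 2 / 2 ≤ f s ^ 2 := by
      intro s hs
      have hs0 : (0:ℝ) ≤ s := le_trans ht0 hs.1
      have h1 : |f s ^ 2 - f t ^ 2| ≤ L * |s - t| :=
        hlip2 t ht0 s hs0
      have h2 : |s - t| ≤ δ := by
        rw [abs_sub_le_iff]
        constructor <;> [linarith [hs.1, hs.2]; linarith [hs.1]]
      have h3 : L * |s - t| ≤ (L + 1) * δ := by
        have := abs_nonneg (s - t)
        nlinarith
      have h4 : (L + 1) * δ = ε ^ 2 / 2 := by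
        rw [hδdef]; field_simp
      have h5 : ε ^ 2 ≤ f t ^ 2 := by
        have := sq_abs (f t)
        nlinarith [abs_nonneg (f t)]
      have := abs_sub_le_iff.mp h1
      nlinarith
    -- hence the increment of G over [t, t+δ] is at least c
    have hinc : c ≤ G (t + δ) - G t := by
      have h1 : (∫ s in t..(t + δ), (ε ^ 2 / 2 : ℝ)) ≤ ∫ s in t..(t + δ), f s ^ 2 := by
        apply intervalIntegral.integral_mono_on (by linarith)
          (intervalIntegrable_const) (hint a t (t + δ))
        exact hbig
      have h2 : (∫ s in t..(t + δ), (ε ^ 2 / 2 : ℝ)) = c := by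
        rw [intervalIntegral.integral_const, smul_eq_mul, hcdef]
        ring
      have h3 := hGadd t (t + δ)
      linarith
    exact absurd (hN t htN) (by linarith)
  refine ⟨?_, key⟩
  have hsum : Tendsto (fun t => ∑ a, (deriv (w a) t) ^ 2) atTop (nhds 0) := by
    have := tendsto_finset_sum Finset.univ (fun a _ => (key a).pow 2)
    simpa using this
  have := hsum.const_mul (1/2 : ℝ)
  simpa using this
end
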